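/- arXiv:1110.4519 — 3 statements merged into one kernel-verified Lean document; each statement's English description precedes it below -/
import Mathlib

section
/- Let Y₁,…,Y_q be locally Lipschitz vector fields on ℝⁿ such that for every bounded open set Ω there is C_Ω > 0 with [Y_j, Y_k](x) ∈ P_x^{C_Ω} for almost every x ∈ Ω, where P_x^r = {Σ_j c_j Y_j(x) : |c| ≤ r}. Then there exist Lebesgue-measurable functions c_{jk}^i : ℝⁿ → ℝ with ‖c_{jk}‖_{L^∞(Ω)} ≤ C_Ω for all bounded open Ω, such that [Y_j,Y_k](x) = Σ_{i=1}^q c_{jk}^i(x) Y_i(x) for almost all x ∈ ℝⁿ and all j,k. -/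
open MeasureTheory Set

noncomputable section

/-- a.e.-defined bracket of Lipschitz vector fields, `[Y_j,Y_k] = (Y_j g_k - Y_k g_j)·∇`. -/
def vbracket {n : ℕ} (f g : (Fin n → ℝ) → (Fin n → ℝ)) (x : Fin n → ℝ) : Fin n → ℝ :=
  fderiv ℝ g x (f x) - fderiv ℝ f x (g x)

/-!
The coefficients are `c_{jk}(x) = Y_x⁺ [Y_j, Y_k](x)`, the minimal-norm solution of
`Y_x c = [Y_j, Y_k](x)`: it solves the system wherever some solution exists, and its norm is at most
that of any solution, so it inherits every bound `C_Ω`. Measurability comes from writing it as the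
limit of the Tikhonov regularizations `(Y_xᵀ Y_x + ε)⁻¹ Y_xᵀ [Y_j, Y_k](x)`, continuous in the data.
The limit exists because a consistent right-hand side has the form `b = M Mᵀ y`, and then the
regularized solution is within `√(ε/4) |y|` of `Mᵀ y`, which is orthogonal to `ker M`.
-/

namespace Matrix

open Filter Topology

variable {m n : Type*} [Fintype m] [Fintype n]

theorem range_mulVecLin_mul_transpose (M : Matrix m n ℝ) :
    LinearMap.range (M * Mᵀ).mulVecLin = LinearMap.range M.mulVecLin := by
  refine Submodule.eq_of_le_of_finrank_eq ?_ (rank_self_mul_transpose M)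
  rw [mulVecLin_mul]
  exact LinearMap.range_comp_le_range _ _

theorem exists_mulVec_transpose_mulVec_eq (M : Matrix m n ℝ) (a : n → ℝ) :
    ∃ y, M *ᵥ (Mᵀ *ᵥ y) = M *ᵥ a := by
  have : M *ᵥ a ∈ LinearMap.range (M * Mᵀ).mulVecLin := by
    rw [range_mulVecLin_mul_transpose]
    exact ⟨a, rfl⟩
  obtain ⟨y, hy⟩ := this
  exact ⟨y, by rwa [mulVec_mulVec]⟩

theorem dotProduct_self_nonneg (v : n → ℝ) : 0 ≤ v ⬝ᵥ v :=
  Finset.sum_nonneg fun _ _ => mul_self_nonneg _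

theorem dotProduct_self_eq_sum_sq (v : n → ℝ) : v ⬝ᵥ v = ∑ i, v i ^ 2 := by
  simp only [dotProduct, sq]

theorem dotProduct_self_le_of_mulVec_eq {M : Matrix m n ℝ} {y : m → ℝ} {a : n → ℝ}
    (h : M *ᵥ (Mᵀ *ᵥ y) = M *ᵥ a) : (Mᵀ *ᵥ y) ⬝ᵥ (Mᵀ *ᵥ y) ≤ a ⬝ᵥ a := by
  have horth : (Mᵀ *ᵥ y) ⬝ᵥ (a - Mᵀ *ᵥ y) = 0 := by
    rw [mulVec_transpose, ← dotProduct_mulVec, mulVec_sub, ← mulVec_transpose, h, sub_self,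
      dotProduct_zero]
  have hnonneg := dotProduct_self_nonneg (a - Mᵀ *ᵥ y)
  simp only [sub_dotProduct, dotProduct_sub, dotProduct_comm a] at horth hnonneg
  linarith

theorem norm_le_sqrt_dotProduct_self (v : n → ℝ) : ‖v‖ ≤ √(v ⬝ᵥ v) := by
  refine (pi_norm_le_iff_of_nonneg (Real.sqrt_nonneg _)).2 fun i => ?_
  rw [Real.norm_eq_abs, ← Real.sqrt_sq_eq_abs, dotProduct_self_eq_sum_sq]
  exact Real.sqrt_le_sqrt (Finset.single_le_sum (fun j _ => sq_nonneg (v j)) (Finset.mem_univ i))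

variable [DecidableEq n]

def tikhonov (M : Matrix m n ℝ) (b : m → ℝ) (ε : ℝ) : n → ℝ :=
  (Mᵀ * M + ε • 1)⁻¹ *ᵥ (Mᵀ *ᵥ b)

theorem posDef_transpose_mul_self_add_smul_one (M : Matrix m n ℝ) {ε : ℝ} (hε : 0 < ε) :
    (Mᵀ * M + ε • 1 : Matrix n n ℝ).PosDef := by
  have h := posSemidef_conjTranspose_mul_self M
  rw [conjTranspose_eq_transpose_of_trivial] at h
  exact PosDef.posSemidef_add h (PosDef.one.smul hε)

theorem mulVec_tikhonov (M : Matrix m n ℝ) (b : m → ℝ) {ε : ℝ} (hε : 0 < ε) :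
    (Mᵀ * M + ε • 1) *ᵥ tikhonov M b ε = Mᵀ *ᵥ b := by
  have hdet := (posDef_transpose_mul_self_add_smul_one M hε).det_pos
  rw [tikhonov, mulVec_mulVec, mul_nonsing_inv _ hdet.ne'.isUnit, one_mulVec]

theorem dotProduct_self_tikhonov_sub_le (M : Matrix m n ℝ) (y : m → ℝ) {ε : ℝ} (hε : 0 < ε) :
    (tikhonov M (M *ᵥ (Mᵀ *ᵥ y)) ε - Mᵀ *ᵥ y) ⬝ᵥ (tikhonov M (M *ᵥ (Mᵀ *ᵥ y)) ε - Mᵀ *ᵥ y)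
      ≤ ε / 4 * (y ⬝ᵥ y) := by
  set e := tikhonov M (M *ᵥ (Mᵀ *ᵥ y)) ε - Mᵀ *ᵥ y
  have hNe : (Mᵀ * M + ε • 1) *ᵥ e = -ε • (Mᵀ *ᵥ y) := by
    rw [mulVec_sub, mulVec_tikhonov M _ hε, add_mulVec, smul_mulVec, one_mulVec,
      ← mulVec_mulVec, neg_smul]
    abel
  have key : (M *ᵥ e) ⬝ᵥ (M *ᵥ e) + ε * (e ⬝ᵥ e) = -ε * (y ⬝ᵥ (M *ᵥ e)) := by
    simpa only [add_mulVec, smul_mulVec, one_mulVec, ← mulVec_mulVec, dotProduct_add,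
      dotProduct_smul, smul_eq_mul, dotProduct_transpose_mulVec] using congrArg (e ⬝ᵥ ·) hNe
  have hsq := dotProduct_self_nonneg (M *ᵥ e + (ε / 2) • y)
  simp only [add_dotProduct, dotProduct_add, smul_dotProduct, dotProduct_smul, smul_eq_mul,
    dotProduct_comm y] at hsq
  have hε_mul : ε * (e ⬝ᵥ e) ≤ ε * (ε / 4 * (y ⬝ᵥ y)) := by
    rw [dotProduct_comm y] at key
    linarith
  exact le_of_mul_le_mul_left hε_mul hε

theorem tendsto_tikhonov (M : Matrix m n ℝ) (y : m → ℝ) :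
    Tendsto (tikhonov M (M *ᵥ (Mᵀ *ᵥ y))) (𝓝[>] 0) (𝓝 (Mᵀ *ᵥ y)) := by
  rw [tendsto_iff_norm_sub_tendsto_zero]
  have hbound : Tendsto (fun ε : ℝ => √(ε / 4 * (y ⬝ᵥ y))) (𝓝[>] 0) (𝓝 0) := by
    have hcont : Continuous fun ε : ℝ => √(ε / 4 * (y ⬝ᵥ y)) := by fun_prop
    simpa using (hcont.tendsto 0).mono_left nhdsWithin_le_nhds
  refine squeeze_zero' (Eventually.of_forall fun _ => norm_nonneg _) ?_ hbound
  filter_upwards [self_mem_nhdsWithin] with ε (hε : 0 < ε)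
  exact (norm_le_sqrt_dotProduct_self _).trans
    (Real.sqrt_le_sqrt (dotProduct_self_tikhonov_sub_le M y hε))

theorem continuous_tikhonov {ε : ℝ} (hε : 0 < ε) :
    Continuous fun p : (m → n → ℝ) × (m → ℝ) => tikhonov (of p.1) p.2 ε := by
  have hN : Continuous fun p : (m → n → ℝ) × (m → ℝ) =>
      (of p.1)ᵀ * of p.1 + ε • (1 : Matrix n n ℝ) :=
    (continuous_fst.matrix_transpose.matrix_mul continuous_fst).add continuous_const
  have hinv : Continuous fun p : (m → n → ℝ) × (m → ℝ) =>
      ((of p.1)ᵀ * of p.1 + ε • (1 : Matrix n n ℝ))⁻¹ := by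
    refine continuous_iff_continuousAt.2 fun p => ContinuousAt.comp ?_ hN.continuousAt
    refine continuousAt_matrix_inv _ ?_
    rw [Ring.inverse_eq_inv']
    exact continuousAt_inv₀ (posDef_transpose_mul_self_add_smul_one (of p.1) hε).det_pos.ne'
  exact hinv.matrix_mulVec (continuous_fst.matrix_transpose.matrix_mulVec continuous_snd)

/-- For consistent `b` this is the minimal-norm solution `M⁺ b` of `M *ᵥ c = b`; defining it as a
limit of Tikhonov regularizations, each continuous in `(M, b)`, makes it measurable. -/
def minNormSolution (M : Matrix m n ℝ) (b : m → ℝ) : n → ℝ :=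
  limUnder atTop fun k : ℕ => tikhonov M b (1 / (k + 1))

theorem minNormSolution_mulVec_transpose_mulVec (M : Matrix m n ℝ) (y : m → ℝ) :
    minNormSolution M (M *ᵥ (Mᵀ *ᵥ y)) = Mᵀ *ᵥ y := by
  have hseq : Tendsto (fun k : ℕ => (1 : ℝ) / (k + 1)) atTop (𝓝[>] 0) :=
    tendsto_nhdsWithin_iff.2 ⟨tendsto_one_div_add_atTop_nhds_zero_nat,
      Eventually.of_forall fun _ => mem_Ioi.2 Nat.one_div_pos_of_nat⟩
  exact ((tendsto_tikhonov M y).comp hseq).limUnder_eq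

theorem mulVec_minNormSolution {M : Matrix m n ℝ} {a : n → ℝ} {b : m → ℝ}
    (h : M *ᵥ a = b) : M *ᵥ minNormSolution M b = b := by
  obtain ⟨y, hy⟩ := exists_mulVec_transpose_mulVec_eq M a
  rw [← h, ← hy, minNormSolution_mulVec_transpose_mulVec]

theorem dotProduct_self_minNormSolution_le {M : Matrix m n ℝ} {a : n → ℝ} {b : m → ℝ}
    (h : M *ᵥ a = b) : minNormSolution M b ⬝ᵥ minNormSolution M b ≤ a ⬝ᵥ a := by
  obtain ⟨y, hy⟩ := exists_mulVec_transpose_mulVec_eq M a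
  rw [← h, ← hy, minNormSolution_mulVec_transpose_mulVec]
  exact dotProduct_self_le_of_mulVec_eq hy

theorem measurable_minNormSolution {α : Type*} [MeasurableSpace α] {M : α → Matrix m n ℝ}
    {b : α → m → ℝ} (hM : ∀ i j, Measurable fun x => M x i j) (hb : Measurable b) :
    Measurable fun x => minNormSolution (M x) (b x) := by
  have hMb : Measurable fun x => ((fun i j => M x i j), b x) :=
    (measurable_pi_lambda _ fun i => measurable_pi_lambda _ (hM i)).prodMk hb
  refine (MeasureTheory.StronglyMeasurable.limUnder fun k => ?_).measurable
  exact ((continuous_tikhonov Nat.one_div_pos_of_nat).measurable.comp hMb).stronglyMeasurable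

end Matrix

theorem measurable_vbracket {n : ℕ} {f g : (Fin n → ℝ) → (Fin n → ℝ)} (hf : Measurable f)
    (hg : Measurable g) : Measurable (vbracket f g) := by
  have happly := isBoundedBilinearMap_apply (𝕜 := ℝ) (E := Fin n → ℝ) (F := Fin n → ℝ)
  exact (happly.continuous.measurable.comp ((measurable_fderiv ℝ g).prodMk hf)).sub
    (happly.continuous.measurable.comp ((measurable_fderiv ℝ f).prodMk hg))

theorem MeasureTheory.ae_of_forall_ae_restrict_isOpen_isBounded {α : Type*}
    [PseudoMetricSpace α] [MeasurableSpace α] {μ : Measure α} {p : α → Prop}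
    (h : ∀ Ω : Set α, IsOpen Ω → Bornology.IsBounded Ω → ∀ᵐ x ∂μ.restrict Ω, p x) :
    ∀ᵐ x ∂μ, p x := by
  rcases isEmpty_or_nonempty α with _ | ⟨⟨x₀⟩⟩
  · exact ae_of_all μ fun x => isEmptyElim x
  · rw [← Measure.restrict_univ (μ := μ), ← Metric.iUnion_ball_nat x₀, ae_restrict_iUnion_iff]
    exact fun k => h _ Metric.isOpen_ball Metric.isBounded_ball

/-- Measurable selection of the coefficients in the finite-type involutivity
condition: if `[Y_j,Y_k](x) ∈ P_x^{C_Ω}` a.e. on every bounded open `Ω`, there are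
measurable `c_{jk}^i` with `|c_{jk}(x)| ≤ C_Ω` a.e. on `Ω` and
`[Y_j,Y_k] = ∑ᵢ c_{jk}^i Y_i` a.e. -/
theorem measurable_selection_involutivity (n q : ℕ)
    (Y : Fin q → (Fin n → ℝ) → (Fin n → ℝ))
    (hY : ∀ j, LocallyLipschitz (Y j))
    (hinv : ∀ Ω : Set (Fin n → ℝ), IsOpen Ω → Bornology.IsBounded Ω →
      ∃ C > 0, ∀ᵐ x ∂(volume.restrict Ω),
        (∀ i, DifferentiableAt ℝ (Y i) x) ∧
        ∀ j k : Fin q, ∃ c : Fin q → ℝ, Real.sqrt (∑ i, c i ^ 2) ≤ C ∧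
          vbracket (Y j) (Y k) x = ∑ i, c i • Y i x) :
    ∃ c : Fin q → Fin q → Fin q → (Fin n → ℝ) → ℝ,
      (∀ j k i, Measurable (c j k i)) ∧
      (∀ᵐ x ∂(volume : Measure (Fin n → ℝ)), ∀ j k : Fin q,
        vbracket (Y j) (Y k) x = ∑ i, c j k i x • Y i x) ∧
      (∀ Ω : Set (Fin n → ℝ), IsOpen Ω → Bornology.IsBounded Ω →
        ∀ C : ℝ, 0 < C →
        (∀ᵐ x ∂(volume.restrict Ω),
          (∀ i, DifferentiableAt ℝ (Y i) x) ∧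
          ∀ j k : Fin q, ∃ c' : Fin q → ℝ, Real.sqrt (∑ i, c' i ^ 2) ≤ C ∧
            vbracket (Y j) (Y k) x = ∑ i, c' i • Y i x) →
        ∀ᵐ x ∂(volume.restrict Ω), ∀ j k : Fin q,
          Real.sqrt (∑ i, c j k i x ^ 2) ≤ C) := by
  set A : (Fin n → ℝ) → Matrix (Fin n) (Fin q) ℝ :=
    fun x => (Matrix.of fun i => Y i x).transpose
  have hA : ∀ x c, (A x).mulVec c = ∑ i, c i • Y i x := fun x c => by
    rw [Matrix.mulVec_transpose, Matrix.vecMul_eq_sum]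
    rfl
  have hsolvable : ∀ᵐ x, ∀ j k, ∃ a, (A x).mulVec a = vbracket (Y j) (Y k) x := by
    refine ae_of_forall_ae_restrict_isOpen_isBounded fun Ω hΩ hbdd => ?_
    obtain ⟨C, -, hC⟩ := hinv Ω hΩ hbdd
    filter_upwards [hC] with x hx j k
    obtain ⟨a, -, ha⟩ := hx.2 j k
    exact ⟨a, (hA x a).trans ha.symm⟩
  have hYmeas : ∀ i, Measurable (Y i) := fun i => (hY i).continuous.measurable
  refine ⟨fun j k i x => Matrix.minNormSolution (A x) (vbracket (Y j) (Y k) x) i,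
    fun j k i => ?_, ?_, ?_⟩
  · exact (measurable_pi_apply i).comp <| Matrix.measurable_minNormSolution
      (fun r i => (measurable_pi_apply r).comp (hYmeas i))
      (measurable_vbracket (hYmeas j) (hYmeas k))
  · filter_upwards [hsolvable] with x hx j k
    obtain ⟨a, ha⟩ := hx j k
    rw [← hA, Matrix.mulVec_minNormSolution ha]
  · intro Ω _ _ C _ hC
    filter_upwards [hC] with x hx j k
    obtain ⟨a, haC, ha⟩ := hx.2 j k
    rw [← Matrix.dotProduct_self_eq_sum_sq] at haC ⊢
    exact (Real.sqrt_le_sqrt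
      (Matrix.dotProduct_self_minNormSolution_le ((hA x a).trans ha.symm))).trans haC
end
end

section
/- Let γ : I → ℝⁿ be a subunit path for a family of locally Lipschitz vector fields satisfying the exponential-type estimate |Λ_p(γ(t)) − Λ_p(γ(s))| ≤ |Λ_p(γ(s))|(e^{C|t−s|} − 1) for |t−s| ≤ 1/C, locally uniformly. Then for each p, the set A_p := {t ∈ I : Λ_p(γ(t)) = 0} is both open and closed in I; hence A_p = ∅ or A_p = I. -/
open Set

theorem IsPreconnected.eq_empty_or_eq_of_isClopen_preimage {X : Type*} [TopologicalSpace X]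
    {I T : Set X} (hI : IsPreconnected I) (hTI : T ⊆ I)
    (hT : IsClopen (Subtype.val ⁻¹' T : Set I)) : T = ∅ ∨ T = I := by
  have := Subtype.preconnectedSpace hI
  have hT_image : Subtype.val '' (Subtype.val ⁻¹' T : Set I) = T := by
    rw [Subtype.image_preimage_coe, inter_eq_right.mpr hTI]
  rcases isClopen_iff.mp hT with h | h
  · left
    rw [← hT_image, h, image_empty]
  · right
    rw [← hT_image, h, Subtype.coe_image_univ]

theorem Metric.isOpen_setOf_eq_zero_of_forall_dist_lt {X E : Type*} [PseudoMetricSpace X]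
    [Zero E] {f : X → E} {δ : ℝ} (hδ : 0 < δ)
    (h : ∀ x y, dist y x < δ → f x = 0 → f y = 0) : IsOpen {x | f x = 0} :=
  Metric.isOpen_iff.mpr fun x hx => ⟨δ, hδ, fun y hy => h x y hy hx⟩

/-- If `F = Λ_p ∘ γ` is continuous on an interval `I` and satisfies the
exponential-type estimate `|F t − F s| ≤ |F s| (e^{C|t−s|} − 1)` for `|t−s| ≤ 1/C`,
then the zero set `A_p = {t ∈ I : F t = 0}` is open and closed in `I`; hence it is
empty or all of `I`. -/
theorem zero_set_clopen (N : ℕ) (I : Set ℝ) (hI : I.OrdConnected)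
    (F : ℝ → EuclideanSpace ℝ (Fin N)) (hF : ContinuousOn F I)
    (C : ℝ) (hC : 0 < C)
    (hest : ∀ s ∈ I, ∀ t ∈ I, |t - s| ≤ 1 / C →
      ‖F t - F s‖ ≤ ‖F s‖ * (Real.exp (C * |t - s|) - 1)) :
    IsOpen (Subtype.val ⁻¹' {t ∈ I | F t = 0} : Set I) ∧
    IsClosed (Subtype.val ⁻¹' {t ∈ I | F t = 0} : Set I) ∧
    ({t ∈ I | F t = 0} = ∅ ∨ {t ∈ I | F t = 0} = I) := by
  have hA : (Subtype.val ⁻¹' {t ∈ I | F t = 0} : Set I) = {x : I | F x = 0} := by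
    ext x
    simp
  -- the estimate at a zero `s` of `F` forces `F t = 0` for `|t - s| ≤ 1 / C`
  have hopen : IsOpen {x : I | F x = 0} :=
    Metric.isOpen_setOf_eq_zero_of_forall_dist_lt (one_div_pos.mpr hC) fun x y hxy hx => by
      have hdist : |(y : ℝ) - x| ≤ 1 / C := by
        rw [← Real.dist_eq, ← Subtype.dist_eq]
        exact hxy.le
      simpa [hx] using hest x x.2 y y.2 hdist
  have hclosed : IsClosed {x : I | F x = 0} := isClosed_eq hF.domRestrict continuous_const
  exact ⟨hA ▸ hopen, hA ▸ hclosed, hI.isPreconnected.eq_empty_or_eq_of_isClopen_preimage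
    (sep_subset _ _) (hA ▸ ⟨hclosed, hopen⟩)⟩
end

section
/- Let Y₁, Y₂ be the vector fields on ℝ² given by Y₁ = ∂₁ + f(x₁)∂₂ and Y₂ = |x₂ − F(x₁)|∂₂, where F(x₁) = x₁|x₁| and f(x₁) = 2|x₁|. Then Y₁ and Y₂ are Lipschitz, [Y₁,Y₂] = 0 almost everywhere, and the orbit of the origin is exactly the graph {x ∈ ℝ² : x₂ = F(x₁)}, which is a one-dimensional C^{1,1} submanifold of ℝ². -/
open MeasureTheory Set

noncomputable section

/-- `γ` is a subunit path for the family `Y` on `[0,T]`. -/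
def IsSubunitPath {n q : ℕ} (Y : Fin q → (Fin n → ℝ) → (Fin n → ℝ))
    (T : ℝ) (γ : ℝ → (Fin n → ℝ)) : Prop :=
  (∃ L, LipschitzOnWith L γ (Set.Icc 0 T)) ∧
  ∃ u : ℝ → Fin q → ℝ,
    ∀ᵐ t ∂(volume.restrict (Set.Icc 0 T)),
      Real.sqrt (∑ j, u t j ^ 2) ≤ 1 ∧
      HasDerivAt γ (∑ j, u t j • Y j (γ t)) t

/-- Orbit membership: reachability by a subunit path (finite control distance). -/
def InOrbit {n q : ℕ} (Y : Fin q → (Fin n → ℝ) → (Fin n → ℝ))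
    (x y : Fin n → ℝ) : Prop :=
  ∃ T ≥ (0:ℝ), ∃ γ : ℝ → (Fin n → ℝ), IsSubunitPath Y T γ ∧ γ 0 = x ∧ γ T = y

/-- The vector fields `Y₁ = ∂₁ + 2|x₁|∂₂`, `Y₂ = |x₂ − x₁|x₁||∂₂` of Example 2. -/
def Yex : Fin 2 → (Fin 2 → ℝ) → (Fin 2 → ℝ) := fun j x =>
  if j = 0 then ![1, 2 * abs (x 0)] else ![0, abs (x 1 - x 0 * abs (x 0))]

/-!
Write `φ(x) = x₂ - x₁|x₁|` (`graphDefect`), so that `Y₂ = |φ| ∂₂`. Since `(s|s|)' = 2|s|`, the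
field `Y₁` is tangent to the level sets of `φ`; and `Y₁` depends on `x₁` only while `Y₂` is
vertical. Hence each field has zero line derivative in the direction of the other at every point,
so the bracket vanishes everywhere (`fderiv` is `0` where a field is not differentiable), and the
fields, being locally Lipschitz, are differentiable a.e. by Rademacher's theorem.

Along a subunit path `γ`, the function `h = φ ∘ γ` is Lipschitz with `h' = u₂ |h|` a.e., so
`|h'| ≤ |h|` and a Grönwall argument for absolutely continuous functions shows that `h`
vanishes identically once `h 0 = 0`. Conversely the graph is swept out by `t ↦ (±t, ±t|t|)`,
which follows `±Y₁`.
-/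

theorem LocallyLipschitz.ae_differentiableAt {E F : Type*} [NormedAddCommGroup E]
    [NormedSpace ℝ E] [MeasurableSpace E] [BorelSpace E] [FiniteDimensional ℝ E]
    [NormedAddCommGroup F] [NormedSpace ℝ F] [FiniteDimensional ℝ F]
    {μ : Measure E} [μ.IsAddHaarMeasure] {f : E → F} (hf : LocallyLipschitz f) :
    ∀ᵐ x ∂μ, DifferentiableAt ℝ f x := by
  choose K t ht hK using hf
  obtain ⟨S, hS, hcover⟩ :=
    TopologicalSpace.isOpen_iUnion_countable (fun x => interior (t x)) fun _ => isOpen_interior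
  have hdiff : ∀ y ∈ S, ∀ᵐ x ∂μ, x ∈ interior (t y) → DifferentiableAt ℝ f x := fun y _ => by
    filter_upwards [((hK y).mono interior_subset).ae_differentiableWithinAt_of_mem] with x hx hxy
    exact (hx hxy).differentiableAt (isOpen_interior.mem_nhds hxy)
  filter_upwards [(ae_ball_iff hS).2 hdiff] with x hx
  have hxS : x ∈ ⋃ y ∈ S, interior (t y) :=
    hcover ▸ mem_iUnion.2 ⟨x, mem_interior_iff_mem_nhds.2 (ht x)⟩
  obtain ⟨y, hy, hxy⟩ := mem_iUnion₂.1 hxS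
  exact hx y hy hxy

theorem LocallyLipschitz.matrixVecCons {α β : Type*} [PseudoEMetricSpace α]
    [PseudoMetricSpace β] {n : ℕ} {f : α → β} {g : α → Fin n → β}
    (hf : LocallyLipschitz f) (hg : LocallyLipschitz g) :
    LocallyLipschitz fun x => Matrix.vecCons (f x) (g x) := by
  have hcons : LipschitzWith 1 fun p : β × (Fin n → β) => Matrix.vecCons p.1 p.2 := by
    refine LipschitzWith.of_dist_le_mul fun p q => ?_
    rw [NNReal.coe_one, one_mul, dist_pi_le_iff dist_nonneg]
    refine Fin.cases ?_ fun i => ?_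
    · exact (Prod.dist_eq (x := p) (y := q)) ▸ le_max_left _ _
    · exact (dist_le_pi_dist p.2 q.2 i).trans ((Prod.dist_eq (x := p) (y := q)) ▸ le_max_right _ _)
  exact hcons.locallyLipschitz.comp (hf.prodMk hg)

theorem LocallyLipschitz.exists_lipschitzOnWith_comp {α β γ : Type*} [PseudoMetricSpace α]
    [PseudoMetricSpace β] [PseudoMetricSpace γ] {f : β → γ} {g : α → β} {s : Set α} {K : NNReal}
    (hf : LocallyLipschitz f) (hg : LipschitzOnWith K g s) (hs : IsCompact s) :
    ∃ K', LipschitzOnWith K' (f ∘ g) s := by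
  obtain ⟨K', hK'⟩ := hf.locallyLipschitzOn.exists_lipschitzOnWith_of_compact
    (hs.image_of_continuousOn hg.continuousOn)
  exact ⟨K' * K, hK'.comp hg (mapsTo_image g s)⟩

theorem fderiv_apply_eq_zero_of_hasLineDerivAt_zero {E F : Type*} [NormedAddCommGroup E]
    [NormedSpace ℝ E] [NormedAddCommGroup F] [NormedSpace ℝ F] {f : E → F} {x v : E}
    (h : HasLineDerivAt ℝ f 0 x v) : fderiv ℝ f x v = 0 := by
  by_cases hd : DifferentiableAt ℝ f x
  · rw [← hd.lineDeriv_eq_fderiv, h.lineDeriv]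
  · rw [fderiv_zero_of_not_differentiableAt hd, zero_apply]

theorem HasDerivAt.abs_of_deriv_zero {f : ℝ → ℝ} {t : ℝ} (hf : HasDerivAt f 0 t) :
    HasDerivAt (fun s => |f s|) 0 t := by
  rw [hasDerivAt_iff_isLittleO] at hf ⊢
  simp only [smul_zero, sub_zero] at hf ⊢
  exact (Asymptotics.isBigO_of_le _ fun s => abs_abs_sub_abs_le_abs_sub (f s) (f t)).trans_isLittleO
    hf

theorem AbsolutelyContinuousOnInterval.eq_zero_of_ae_abs_deriv_le_mul_abs {f : ℝ → ℝ} {a b K : ℝ}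
    (hab : a ≤ b) (hf : AbsolutelyContinuousOnInterval f a b) (ha : f a = 0)
    (hd : ∀ᵐ t, t ∈ Icc a b → |deriv f t| ≤ K * |f t|) : f b = 0 := by
  -- the energy `exp (-2Kt) f(t)²` vanishes at `a` and is nonincreasing on `[a, b]`
  set E : ℝ → ℝ := fun t => Real.exp (-(2 * K) * t) * (f t * f t)
  have hE : AbsolutelyContinuousOnInterval E a b :=
    (ContDiffOn.absolutelyContinuousOnInterval (by fun_prop)).fun_mul (hf.fun_mul hf)
  have hderiv : ∀ᵐ t ∂volume.restrict (Icc a b), deriv E t ≤ 0 := by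
    rw [ae_restrict_iff' measurableSet_Icc]
    filter_upwards [hf.ae_differentiableAt, hd] with t hft hdt htI
    have hft := (hft (uIcc_of_le hab ▸ htI)).hasDerivAt
    have hEt : HasDerivAt E (Real.exp (-(2 * K) * t) *
        (-(2 * K) * (f t * f t) + 2 * (f t * deriv f t))) t :=
      ((((hasDerivAt_id' t).const_mul (-(2 * K))).exp).fun_mul (hft.fun_mul hft)).congr_deriv
        (by ring)
    have hff' : f t * deriv f t ≤ K * (f t * f t) := calc
      f t * deriv f t ≤ |f t| * |deriv f t| := by rw [← abs_mul]; exact le_abs_self _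
      _ ≤ |f t| * (K * |f t|) := mul_le_mul_of_nonneg_left (hdt htI) (abs_nonneg _)
      _ = K * (f t * f t) := by rw [← abs_mul_abs_self (f t)]; ring
    rw [hEt.deriv]
    exact mul_nonpos_of_nonneg_of_nonpos (Real.exp_pos _).le (by linarith)
  have hEb : E b ≤ 0 := by
    have hint : 0 ≤ ∫ t in a..b, -deriv E t := intervalIntegral.integral_nonneg_of_ae_restrict hab
      (hderiv.mono fun t ht => by simpa using ht)
    rw [intervalIntegral.integral_neg, hE.integral_deriv_eq_sub] at hint
    simpa [E, ha] using hint
  have : f b * f b ≤ 0 := nonpos_of_mul_nonpos_right hEb (Real.exp_pos _)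
  exact mul_self_eq_zero.1 (le_antisymm this (mul_self_nonneg _))

theorem hasDerivAt_mul_abs (s : ℝ) : HasDerivAt (fun s : ℝ => s * |s|) (2 * |s|) s := by
  rcases eq_or_ne s 0 with rfl | hs
  · rw [hasDerivAt_iff_tendsto_slope_zero]
    simp only [abs_zero, mul_zero, zero_add, sub_zero]
    refine (continuous_abs.tendsto' (0 : ℝ) 0 abs_zero).mono_left nhdsWithin_le_nhds |>.congr' ?_
    filter_upwards [self_mem_nhdsWithin] with t (ht : t ≠ 0)
    simp [inv_mul_cancel_left₀ ht]
  · exact ((hasDerivAt_id' s).mul (hasDerivAt_abs hs)).congr_deriv (by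
      rw [self_mul_sign]; ring)

theorem deriv_mul_abs : (deriv fun s : ℝ => s * |s|) = fun s => 2 * |s| :=
  funext fun s => (hasDerivAt_mul_abs s).deriv

theorem contDiff_mul_abs : ContDiff ℝ 1 fun s : ℝ => s * |s| :=
  contDiff_one_iff_deriv.2 ⟨fun s => (hasDerivAt_mul_abs s).differentiableAt,
    deriv_mul_abs ▸ by fun_prop⟩

theorem lipschitzWith_two_mul_abs : LipschitzWith 2 fun s : ℝ => 2 * |s| :=
  LipschitzWith.of_dist_le_mul fun a b => by
    simp only [Real.dist_eq, NNReal.coe_ofNat, ← mul_sub, abs_mul, abs_two]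
    exact mul_le_mul_of_nonneg_left (abs_abs_sub_abs_le_abs_sub a b) zero_le_two

def graphDefect (x : Fin 2 → ℝ) : ℝ := x 1 - x 0 * |x 0|

theorem Yex_zero_apply (x : Fin 2 → ℝ) : Yex 0 x = ![1, 2 * |x 0|] := rfl

theorem Yex_one_apply (x : Fin 2 → ℝ) : Yex 1 x = ![0, |graphDefect x|] := rfl

theorem hasFDerivAt_graphDefect (x : Fin 2 → ℝ) :
    HasFDerivAt graphDefect
      (ContinuousLinearMap.proj (R := ℝ) 1 - (2 * |x 0|) • ContinuousLinearMap.proj 0) x :=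
  (hasFDerivAt_apply 1 x).sub <|
    (hasDerivAt_mul_abs (x 0)).comp_hasFDerivAt (f := fun y : Fin 2 → ℝ => y 0) x
      (hasFDerivAt_apply 0 x)

theorem contDiff_graphDefect : ContDiff ℝ 1 graphDefect :=
  (contDiff_apply (𝕜 := ℝ) (E := ℝ) 1).sub
    (contDiff_mul_abs.comp (contDiff_apply (𝕜 := ℝ) (E := ℝ) 0))

theorem locallyLipschitz_Yex_zero : LocallyLipschitz (Yex 0) :=
  (LocallyLipschitz.const 1).matrixVecCons
    ((lipschitzWith_two_mul_abs.comp (LipschitzWith.eval 0)).locallyLipschitz.matrixVecCons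
      (LocallyLipschitz.const _))

theorem locallyLipschitz_Yex_one : LocallyLipschitz (Yex 1) :=
  (LocallyLipschitz.const 0).matrixVecCons <|
    (lipschitzWith_one_norm.locallyLipschitz.comp contDiff_graphDefect.locallyLipschitz
      ).matrixVecCons (LocallyLipschitz.const _)

theorem hasLineDerivAt_Yex_zero (x : Fin 2 → ℝ) : HasLineDerivAt ℝ (Yex 0) 0 x (Yex 1 x) := by
  have hconst : (fun t : ℝ => Yex 0 (x + t • Yex 1 x)) = fun _ => Yex 0 x := by
    funext t
    simp [Yex_zero_apply, Yex_one_apply, Matrix.vecHead]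
  rw [HasLineDerivAt, hconst]
  exact hasDerivAt_const _ _

theorem hasLineDerivAt_Yex_one (x : Fin 2 → ℝ) : HasLineDerivAt ℝ (Yex 1) 0 x (Yex 0 x) := by
  have hφ : HasLineDerivAt ℝ graphDefect 0 x (Yex 0 x) := by
    simpa [Yex_zero_apply] using (hasFDerivAt_graphDefect x).hasLineDerivAt (Yex 0 x)
  refine hasDerivAt_pi.2 (Fin.forall_fin_two.2 ⟨?_, ?_⟩)
  · simpa [Yex_one_apply] using hasDerivAt_const (0 : ℝ) (0 : ℝ)
  · simpa [Yex_one_apply] using hφ.abs_of_deriv_zero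

theorem vbracket_Yex_eq_zero (x : Fin 2 → ℝ) : vbracket (Yex 0) (Yex 1) x = 0 := by
  rw [vbracket, fderiv_apply_eq_zero_of_hasLineDerivAt_zero (hasLineDerivAt_Yex_one x),
    fderiv_apply_eq_zero_of_hasLineDerivAt_zero (hasLineDerivAt_Yex_zero x), sub_zero]

theorem HasDerivAt.graphDefect_comp {γ : ℝ → Fin 2 → ℝ} {t : ℝ} {u : Fin 2 → ℝ}
    (h : HasDerivAt γ (∑ j, u j • Yex j (γ t)) t) :
    HasDerivAt (graphDefect ∘ γ) (u 1 * |graphDefect (γ t)|) t :=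
  ((hasFDerivAt_graphDefect (γ t)).comp_hasDerivAt t h).congr_deriv (by
    simp [Fin.sum_univ_two, Yex_zero_apply, Yex_one_apply]
    ring)

theorem IsSubunitPath.graphDefect_eq_zero {T : ℝ} {γ : ℝ → Fin 2 → ℝ} (hT : 0 ≤ T)
    (hγ : IsSubunitPath Yex T γ) (h0 : graphDefect (γ 0) = 0) : graphDefect (γ T) = 0 := by
  obtain ⟨⟨L, hL⟩, u, hu⟩ := hγ
  obtain ⟨K, hK⟩ :=
    contDiff_graphDefect.locallyLipschitz.exists_lipschitzOnWith_comp hL isCompact_Icc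
  rw [← uIcc_of_le hT] at hK
  have hbound : ∀ᵐ t, t ∈ Icc 0 T → |deriv (graphDefect ∘ γ) t| ≤ 1 * |graphDefect (γ t)| := by
    rw [ae_restrict_iff' measurableSet_Icc] at hu
    filter_upwards [hu] with t ht htI
    obtain ⟨hut, hγt⟩ := ht htI
    have hu1 : |u t 1| ≤ 1 := (Real.abs_le_sqrt (Finset.single_le_sum
      (fun j _ => sq_nonneg (u t j)) (Finset.mem_univ 1))).trans hut
    rw [hγt.graphDefect_comp.deriv, abs_mul, abs_abs]
    exact mul_le_mul_of_nonneg_right hu1 (abs_nonneg _)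
  exact (hK.absolutelyContinuousOnInterval.eq_zero_of_ae_abs_deriv_le_mul_abs hT h0 hbound :)

theorem isSubunitPath_Yex_graph {c : ℝ} (hc : |c| ≤ 1) (T : ℝ) :
    IsSubunitPath Yex T fun t => ![c * t, c * t * |c * t|] := by
  refine ⟨?_, fun _ => ![c, 0], ae_of_all _ fun t => ⟨?_, ?_⟩⟩
  · have hcd : ContDiff ℝ 1 fun t : ℝ => ![c * t, c * t * |c * t|] :=
      contDiff_pi.2 (Fin.forall_fin_two.2 ⟨by simpa using contDiff_const.mul contDiff_id,
        by simpa [Function.comp_def] using contDiff_mul_abs.comp (contDiff_const.mul contDiff_id)⟩)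
    exact hcd.contDiffOn.exists_lipschitzOnWith one_ne_zero (convex_Icc 0 T) isCompact_Icc
  · simpa [Fin.sum_univ_two, Real.sqrt_sq_eq_abs] using hc
  · have hline : HasDerivAt (fun t : ℝ => c * t) c t := by
      simpa using (hasDerivAt_id t).const_mul c
    refine hasDerivAt_pi.2 (Fin.forall_fin_two.2 ⟨?_, ?_⟩)
    · simpa [Fin.sum_univ_two, Yex_zero_apply, Yex_one_apply] using hline
    · simpa [Fin.sum_univ_two, Yex_zero_apply, Yex_one_apply, Function.comp_def, mul_comm] using
        (hasDerivAt_mul_abs (c * t)).comp t hline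

theorem inOrbit_Yex_of_mem_graph {x : Fin 2 → ℝ} (hx : x 1 = x 0 * |x 0|) :
    InOrbit Yex (fun _ => 0) x := by
  refine ⟨|x 0|, abs_nonneg _, _, isSubunitPath_Yex_graph (c := SignType.sign (x 0)) ?_ _, ?_, ?_⟩
  · cases SignType.sign (x 0) <;> simp
  · funext i; fin_cases i <;> simp
  · funext i; fin_cases i <;> simp [hx]

theorem mem_graph_of_inOrbit_Yex {y : Fin 2 → ℝ} (hy : InOrbit Yex (fun _ => 0) y) :
    y 1 = y 0 * |y 0| := by
  obtain ⟨T, hT, γ, hγ, hγ0, hγT⟩ := hy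
  have h := hγ.graphDefect_eq_zero hT (by simp [graphDefect, hγ0])
  rwa [hγT, graphDefect, sub_eq_zero] at h

/-- Example: `Y₁, Y₂` are Lipschitz, `[Y₁,Y₂] = 0` a.e., and the orbit of the
origin is the graph `{x₂ = x₁|x₁|}`, a one-dimensional `C^{1,1}` submanifold
(graph of the `C^1` function `s ↦ s|s|` with Lipschitz derivative). -/
theorem example_orbit_graph :
    LocallyLipschitz (Yex 0) ∧ LocallyLipschitz (Yex 1) ∧
    (∀ᵐ x ∂(volume : Measure (Fin 2 → ℝ)),
      (∀ i, DifferentiableAt ℝ (Yex i) x) ∧ vbracket (Yex 0) (Yex 1) x = 0) ∧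
    {y : Fin 2 → ℝ | InOrbit Yex (fun _ => 0) y}
      = {x : Fin 2 → ℝ | x 1 = x 0 * |x 0|} ∧
    ContDiff ℝ 1 (fun s : ℝ => s * |s|) ∧
    LipschitzWith 2 (deriv fun s : ℝ => s * |s|) := by
  refine ⟨locallyLipschitz_Yex_zero, locallyLipschitz_Yex_one, ?_, ?_, contDiff_mul_abs,
    deriv_mul_abs ▸ lipschitzWith_two_mul_abs⟩
  · filter_upwards [locallyLipschitz_Yex_zero.ae_differentiableAt,
      locallyLipschitz_Yex_one.ae_differentiableAt] with x h0 h1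
    exact ⟨Fin.forall_fin_two.2 ⟨h0, h1⟩, vbracket_Yex_eq_zero x⟩
  · ext y
    exact ⟨mem_graph_of_inOrbit_Yex, inOrbit_Yex_of_mem_graph⟩
end
end
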